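/- Let x = (B₁,B₂,i,j) and x' = (B₁',B₂',i',j') be ADHM data for (V,W) and (V',W') such that B₁ and B₁' have no common eigenvalue, and let T(x,x') = (B̃₁, B̃₂, ĩ, j̃) be the tensor product ADHM datum on (Ṽ, W̃) = (V⊗W' ⊕ W⊗V', W⊗W') defined by B̃₁ = diag(B₁⊗Id, Id⊗B₁'), B̃₂ = [[B₂⊗Id, X],[Y, Id⊗B₂']], ĩ = (i⊗Id, Id⊗i')ᵗ, j̃ = (j⊗Id, Id⊗j'), where X, Y are the unique solutions of (B₁⊗Id)X − X(Id⊗B₁') + i⊗j' = 0 and (Id⊗B₁')Y − Y(B₁⊗Id) + j⊗i' = 0. If x and x' are both stable, then T(x,x') is stable; if x and x' are both costable, then T(x,x') is costable. -/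

import Mathlib

open TensorProduct

/-- stability: every `B₁,B₂`-invariant subspace containing `Im i` is `⊤`. -/
def IsStableADHM {V W : Type*} [AddCommGroup V] [Module ℂ V] [AddCommGroup W] [Module ℂ W]
    (B₁ B₂ : V →ₗ[ℂ] V) (i : W →ₗ[ℂ] V) : Prop :=
  ∀ S : Submodule ℂ V, LinearMap.range i ≤ S → S.map B₁ ≤ S → S.map B₂ ≤ S → S = ⊤

/-- costability: every `B₁,B₂`-invariant subspace inside `Ker j` is `⊥`. -/
def IsCostableADHM {V W : Type*} [AddCommGroup V] [Module ℂ V] [AddCommGroup W] [Module ℂ W]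
    (B₁ B₂ : V →ₗ[ℂ] V) (j : V →ₗ[ℂ] W) : Prop :=
  ∀ S : Submodule ℂ V, S ≤ LinearMap.ker j → S.map B₁ ≤ S → S.map B₂ ≤ S → S = ⊥

/-!
Coprimality of the minimal polynomials of `B₁` and `B₁'` gives `r = u · μ_{B₁}` with
`r(B₁) = 0` and `r(B₁') = 1`, so `r(B̃₁)` is the projection of `Ṽ` onto `W ⊗ V'`. Hence every
`B̃₁`-invariant subspace is a product `P × Q`, and `B̃₂`-invariance of `P × Q` only sees the
diagonal blocks `B₂ ⊗ 1` and `1 ⊗ B₂'`. Stability of `x ⊗ W'` follows from that of `x` by pulling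
back along the slices `v ↦ v ⊗ w'`, which intertwine `B` with `B ⊗ 1`; costability, by pushing
forward along the coordinate maps `V ⊗ W' → V` of a basis of `W'`.
-/

open Polynomial LinearMap

namespace LinearMap

variable {R M N : Type*} [CommSemiring R] [AddCommMonoid M] [Module R M] [AddCommMonoid N]
  [Module R N]

theorem aeval_prodMap (f : Module.End R M) (g : Module.End R N) (p : R[X]) :
    aeval (f.prodMap g) p = (aeval f p).prodMap (aeval g p) := by
  have h := aeval_algHom_apply (prodMapAlgHom R M N) (f, g) p
  rw [aeval_prod, AlgHom.prod_apply] at h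
  exact h

theorem aeval_rTensor (f : Module.End R M) (p : R[X]) :
    aeval (f.rTensor N) p = (aeval f p).rTensor N :=
  aeval_algHom_apply (Module.End.rTensorAlgHom R M N) f p

theorem aeval_lTensor (f : Module.End R M) (p : R[X]) :
    aeval (f.lTensor N) p = (aeval f p).lTensor N :=
  aeval_algHom_apply (Module.End.lTensorAlgHom R M N) f p

end LinearMap

theorem Module.End.exists_aeval_eq_zero_and_aeval_eq_one {K M N : Type*} [Field K] [IsAlgClosed K]
    [AddCommGroup M] [Module K M] [FiniteDimensional K M]
    [AddCommGroup N] [Module K N] [FiniteDimensional K N] {f : End K M} {g : End K N}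
    (h : ∀ c, ¬(f.HasEigenvalue c ∧ g.HasEigenvalue c)) :
    ∃ r : K[X], aeval f r = 0 ∧ aeval g r = 1 := by
  have hcop : IsCoprime (minpoly K f) (minpoly K g) := by
    refine (isCoprime_iff_aeval_ne_zero_of_isAlgClosed K K _ _).mpr fun c ↦ ?_
    simp only [coe_aeval_eq_eval, ne_eq, ← not_and_or]
    simpa [hasEigenvalue_iff_isRoot] using h c
  obtain ⟨u, v, huv⟩ := hcop
  refine ⟨u * minpoly K f, by simp, ?_⟩
  rw [eq_sub_of_add_eq huv, map_sub, map_mul, minpoly.aeval, mul_zero, map_one, sub_zero]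

namespace Submodule

section Semiring

variable {R M N U : Type*} [Semiring R] [AddCommMonoid M] [Module R M] [AddCommMonoid N]
  [Module R N] [AddCommMonoid U] [Module R U] {P : Submodule R M} {Q : Submodule R N}

theorem map_comap_le_comap_of_comp_eq {f : Module.End R M} {g : Module.End R N}
    {φ : M →ₗ[R] N} (hφ : φ ∘ₗ f = g ∘ₗ φ) {S : Submodule R N} (hS : S.map g ≤ S) :
    (S.comap φ).map f ≤ S.comap φ := by
  rw [map_le_iff_le_comap, ← comap_comp, hφ, comap_comp]
  exact comap_mono (map_le_iff_le_comap.mp hS)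

theorem map_map_le_map_of_comp_eq {f : Module.End R M} {g : Module.End R N}
    {ψ : N →ₗ[R] M} (hψ : ψ ∘ₗ g = f ∘ₗ ψ) {S : Submodule R N} (hS : S.map g ≤ S) :
    (S.map ψ).map f ≤ S.map ψ := by
  rw [← map_comp, ← hψ, map_comp]
  exact map_mono hS

theorem map_le_of_map_prodMap_le {f : Module.End R M} {g : Module.End R N}
    (h : (P.prod Q).map (f.prodMap g) ≤ P.prod Q) : P.map f ≤ P ∧ Q.map g ≤ Q := by
  constructor
  · rintro _ ⟨a, ha, rfl⟩
    simpa using (h ⟨(a, 0), ⟨ha, Q.zero_mem⟩, rfl⟩).1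
  · rintro _ ⟨b, hb, rfl⟩
    simpa using (h ⟨(0, b), ⟨P.zero_mem, hb⟩, rfl⟩).2

theorem map_le_of_map_block_le {A : Module.End R M} {X : N →ₗ[R] M} {Y : M →ₗ[R] N}
    {D : Module.End R N}
    (h : (P.prod Q).map ((A ∘ₗ LinearMap.fst R M N + X ∘ₗ LinearMap.snd R M N).prod
      (Y ∘ₗ LinearMap.fst R M N + D ∘ₗ LinearMap.snd R M N))
      ≤ P.prod Q) : P.map A ≤ P ∧ Q.map D ≤ Q := by
  constructor
  · rintro _ ⟨a, ha, rfl⟩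
    simpa using (h ⟨(a, 0), ⟨ha, Q.zero_mem⟩, rfl⟩).1
  · rintro _ ⟨b, hb, rfl⟩
    simpa using (h ⟨(0, b), ⟨P.zero_mem, hb⟩, rfl⟩).2

theorem range_le_of_range_prod_le {f : U →ₗ[R] M} {g : U →ₗ[R] N}
    (h : range (f.prod g) ≤ P.prod Q) : range f ≤ P ∧ range g ≤ Q :=
  ⟨by rintro _ ⟨u, rfl⟩; exact (h ⟨u, rfl⟩).1, by rintro _ ⟨u, rfl⟩; exact (h ⟨u, rfl⟩).2⟩

theorem le_ker_of_prod_le_ker_coprod {f : M →ₗ[R] U} {g : N →ₗ[R] U}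
    (h : P.prod Q ≤ ker (f.coprod g)) : P ≤ ker f ∧ Q ≤ ker g := by
  constructor
  · intro a ha
    simpa using h (show (a, 0) ∈ P.prod Q from ⟨ha, Q.zero_mem⟩)
  · intro b hb
    simpa using h (show (0, b) ∈ P.prod Q from ⟨P.zero_mem, hb⟩)

end Semiring

theorem eq_prod_comap_inl_comap_inr {R M N : Type*} [CommRing R] [AddCommGroup M] [Module R M]
    [AddCommGroup N] [Module R N] {f : Module.End R M} {g : Module.End R N} {r : R[X]}
    (hf : aeval f r = 0) (hg : aeval g r = 1) {K : Submodule R (M × N)}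
    (hK : K.map (f.prodMap g) ≤ K) :
    K = (K.comap (inl R M N)).prod (K.comap (inr R M N)) := by
  have hsnd : ∀ x ∈ K, (0, x.2) ∈ K := fun x hx ↦ by
    simpa [aeval_prodMap, hf, hg] using
      aeval_apply_smul_mem_of_le_comap hx r _ (map_le_iff_le_comap.mp hK)
  ext ⟨a, b⟩
  simp only [mem_prod, mem_comap, inl_apply, inr_apply]
  refine ⟨fun hab ↦ ⟨by simpa using K.sub_mem hab (hsnd _ hab), hsnd _ hab⟩, fun ⟨ha, hb⟩ ↦ ?_⟩
  simpa using K.add_mem ha hb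

end Submodule

theorem TensorProduct.equivFinsuppOfBasisRight_rTensor_apply {R M M₂ N κ : Type*} [CommSemiring R]
    [AddCommMonoid M] [Module R M] [AddCommMonoid M₂] [Module R M₂] [AddCommMonoid N] [Module R N]
    [DecidableEq κ] (b : Module.Basis κ R N) (f : M →ₗ[R] M₂) (s : M ⊗[R] N) (k : κ) :
    equivFinsuppOfBasisRight b (f.rTensor N s) k = f (equivFinsuppOfBasisRight b s k) := by
  induction s using TensorProduct.induction_on with
  | zero => simp
  | tmul m n => simp
  | add s t hs ht => simp [hs, ht]

theorem TensorProduct.equivFinsuppOfBasisLeft_lTensor_apply {R M M₂ N ι : Type*} [CommSemiring R]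
    [AddCommMonoid M] [Module R M] [AddCommMonoid M₂] [Module R M₂] [AddCommMonoid N] [Module R N]
    [DecidableEq ι] (b : Module.Basis ι R N) (f : M →ₗ[R] M₂) (s : N ⊗[R] M) (k : ι) :
    equivFinsuppOfBasisLeft b (f.lTensor N s) k = f (equivFinsuppOfBasisLeft b s k) := by
  induction s using TensorProduct.induction_on with
  | zero => simp
  | tmul n m => simp
  | add s t hs ht => simp [hs, ht]

section Tensor

variable {V W V₂ : Type*} [AddCommGroup V] [Module ℂ V] [AddCommGroup W] [Module ℂ W]
  [AddCommGroup V₂] [Module ℂ V₂]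
  {B₁ B₂ : Module.End ℂ V} {C₁ C₂ : Module.End ℂ V₂}

theorem IsStableADHM.range_le_of_comp_eq {i : W →ₗ[ℂ] V} (hs : IsStableADHM B₁ B₂ i)
    {φ : V →ₗ[ℂ] V₂}    (h₁ : φ ∘ₗ B₁ = C₁ ∘ₗ φ) (h₂ : φ ∘ₗ B₂ = C₂ ∘ₗ φ) {S : Submodule ℂ V₂}
    (hi : range (φ ∘ₗ i) ≤ S) (hS₁ : S.map C₁ ≤ S) (hS₂ : S.map C₂ ≤ S) : range φ ≤ S := by
  rw [range_le_iff_comap, hs _ ?_ (Submodule.map_comap_le_comap_of_comp_eq h₁ hS₁)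
    (Submodule.map_comap_le_comap_of_comp_eq h₂ hS₂)]
  rwa [← Submodule.map_le_iff_le_comap, ← range_comp]

theorem IsCostableADHM.le_ker_of_comp_eq {j : V →ₗ[ℂ] W} (hc : IsCostableADHM B₁ B₂ j)
    {ψ : V₂ →ₗ[ℂ] V}    (h₁ : ψ ∘ₗ C₁ = B₁ ∘ₗ ψ) (h₂ : ψ ∘ₗ C₂ = B₂ ∘ₗ ψ) {S : Submodule ℂ V₂}
    (hj : S ≤ ker (j ∘ₗ ψ)) (hS₁ : S.map C₁ ≤ S) (hS₂ : S.map C₂ ≤ S) : S ≤ ker ψ := by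
  rw [le_ker_iff_map]
  refine hc _ ?_ (Submodule.map_map_le_map_of_comp_eq h₁ hS₁)
    (Submodule.map_map_le_map_of_comp_eq h₂ hS₂)
  rwa [Submodule.map_le_iff_le_comap, ← ker_comp]

theorem IsStableADHM.rTensor {i : W →ₗ[ℂ] V} (hs : IsStableADHM B₁ B₂ i) (N : Type*)
    [AddCommGroup N] [Module ℂ N] :
    IsStableADHM (B₁.rTensor N) (B₂.rTensor N) (i.rTensor N) := by
  intro S hi hS₁ hS₂
  rw [eq_top_iff, ← span_tmul_eq_top, Submodule.span_le]
  rintro _ ⟨v, n, rfl⟩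
  refine hs.range_le_of_comp_eq (φ := (TensorProduct.mk ℂ V N).flip n) (ext fun _ ↦ rfl)
    (ext fun _ ↦ rfl) ?_ hS₁ hS₂ ⟨v, rfl⟩
  rintro _ ⟨w, rfl⟩
  exact hi ⟨w ⊗ₜ n, rfl⟩

theorem IsStableADHM.lTensor {i : W →ₗ[ℂ] V} (hs : IsStableADHM B₁ B₂ i) (N : Type*)
    [AddCommGroup N] [Module ℂ N] :
    IsStableADHM (B₁.lTensor N) (B₂.lTensor N) (i.lTensor N) := by
  intro S hi hS₁ hS₂
  rw [eq_top_iff, ← span_tmul_eq_top, Submodule.span_le]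
  rintro _ ⟨n, v, rfl⟩
  refine hs.range_le_of_comp_eq (φ := TensorProduct.mk ℂ N V n) (ext fun _ ↦ rfl)
    (ext fun _ ↦ rfl) ?_ hS₁ hS₂ ⟨v, rfl⟩
  rintro _ ⟨w, rfl⟩
  exact hi ⟨n ⊗ₜ w, rfl⟩

theorem IsCostableADHM.rTensor {j : V →ₗ[ℂ] W} (hc : IsCostableADHM B₁ B₂ j) (N : Type*)
    [AddCommGroup N] [Module ℂ N] :
    IsCostableADHM (B₁.rTensor N) (B₂.rTensor N) (j.rTensor N) := by
  intro S hj hS₁ hS₂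
  classical
  let b := Module.Free.chooseBasis ℂ N
  rw [eq_bot_iff]
  intro s hs
  refine (equivFinsuppOfBasisRight b).injective (Finsupp.ext fun k ↦ ?_)
  refine hc.le_ker_of_comp_eq (ψ := Finsupp.lapply k ∘ₗ (equivFinsuppOfBasisRight b).toLinearMap)
    (ext fun s ↦ equivFinsuppOfBasisRight_rTensor_apply b B₁ s k)
    (ext fun s ↦ equivFinsuppOfBasisRight_rTensor_apply b B₂ s k) (fun t ht ↦ ?_) hS₁ hS₂ hs
  change j (equivFinsuppOfBasisRight b t k) = 0
  rw [← equivFinsuppOfBasisRight_rTensor_apply, hj ht, map_zero, Finsupp.zero_apply]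

theorem IsCostableADHM.lTensor {j : V →ₗ[ℂ] W} (hc : IsCostableADHM B₁ B₂ j) (N : Type*)
    [AddCommGroup N] [Module ℂ N] :
    IsCostableADHM (B₁.lTensor N) (B₂.lTensor N) (j.lTensor N) := by
  intro S hj hS₁ hS₂
  classical
  let b := Module.Free.chooseBasis ℂ N
  rw [eq_bot_iff]
  intro s hs
  refine (equivFinsuppOfBasisLeft b).injective (Finsupp.ext fun k ↦ ?_)
  refine hc.le_ker_of_comp_eq (ψ := Finsupp.lapply k ∘ₗ (equivFinsuppOfBasisLeft b).toLinearMap)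
    (ext fun s ↦ equivFinsuppOfBasisLeft_lTensor_apply b B₁ s k)
    (ext fun s ↦ equivFinsuppOfBasisLeft_lTensor_apply b B₂ s k) (fun t ht ↦ ?_) hS₁ hS₂ hs
  change j (equivFinsuppOfBasisLeft b t k) = 0
  rw [← equivFinsuppOfBasisLeft_lTensor_apply, hj ht, map_zero, Finsupp.zero_apply]

end Tensor

theorem stmt13
    (V W V' W' : Type*)
    [AddCommGroup V] [Module ℂ V] [FiniteDimensional ℂ V]
    [AddCommGroup W] [Module ℂ W]
    [AddCommGroup V'] [Module ℂ V'] [FiniteDimensional ℂ V']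
    [AddCommGroup W'] [Module ℂ W']
    (B₁ B₂ : V →ₗ[ℂ] V) (i : W →ₗ[ℂ] V) (j : V →ₗ[ℂ] W)
    (B₁' B₂' : V' →ₗ[ℂ] V') (i' : W' →ₗ[ℂ] V') (j' : V' →ₗ[ℂ] W')
    (hdisj : ∀ c : ℂ, ¬(Module.End.HasEigenvalue B₁ c ∧ Module.End.HasEigenvalue B₁' c))
    (Xs : W ⊗[ℂ] V' →ₗ[ℂ] V ⊗[ℂ] W') (Ys : V ⊗[ℂ] W' →ₗ[ℂ] W ⊗[ℂ] V') :
    (IsStableADHM B₁ B₂ i → IsStableADHM B₁' B₂' i' →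
      IsStableADHM
        ((TensorProduct.map B₁ LinearMap.id).prodMap (TensorProduct.map LinearMap.id B₁'))
        (LinearMap.prod
          ((TensorProduct.map B₂ LinearMap.id) ∘ₗ (LinearMap.fst ℂ _ _)
            + Xs ∘ₗ (LinearMap.snd ℂ _ _))
          (Ys ∘ₗ (LinearMap.fst ℂ _ _)
            + (TensorProduct.map LinearMap.id B₂') ∘ₗ (LinearMap.snd ℂ _ _)))
        (LinearMap.prod (TensorProduct.map i LinearMap.id) (TensorProduct.map LinearMap.id i'))) ∧
    (IsCostableADHM B₁ B₂ j → IsCostableADHM B₁' B₂' j' →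
      IsCostableADHM
        ((TensorProduct.map B₁ LinearMap.id).prodMap (TensorProduct.map LinearMap.id B₁'))
        (LinearMap.prod
          ((TensorProduct.map B₂ LinearMap.id) ∘ₗ (LinearMap.fst ℂ _ _)
            + Xs ∘ₗ (LinearMap.snd ℂ _ _))
          (Ys ∘ₗ (LinearMap.fst ℂ _ _)
            + (TensorProduct.map LinearMap.id B₂') ∘ₗ (LinearMap.snd ℂ _ _)))
        (LinearMap.coprod (TensorProduct.map j LinearMap.id) (TensorProduct.map LinearMap.id j'))) := by
  obtain ⟨r, hr, hr'⟩ := Module.End.exists_aeval_eq_zero_and_aeval_eq_one hdisj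
  have hsplit (K : Submodule ℂ ((V ⊗[ℂ] W') × (W ⊗[ℂ] V')))
      (hK : K.map ((B₁.rTensor W').prodMap (B₁'.lTensor W)) ≤ K) :
      ∃ (P : Submodule ℂ (V ⊗[ℂ] W')) (Q : Submodule ℂ (W ⊗[ℂ] V')), K = P.prod Q :=
    ⟨_, _, Submodule.eq_prod_comap_inl_comap_inr (by rw [aeval_rTensor, hr, rTensor_zero])
      (by rw [aeval_lTensor, hr', Module.End.one_eq_id, lTensor_id]; rfl) hK⟩
  constructor
  · intro hs hs' K hi h₁ h₂
    obtain ⟨P, Q, rfl⟩ := hsplit K h₁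
    obtain ⟨hP₁, hQ₁⟩ := Submodule.map_le_of_map_prodMap_le h₁
    obtain ⟨hP₂, hQ₂⟩ := Submodule.map_le_of_map_block_le h₂
    obtain ⟨hPi, hQi⟩ := Submodule.range_le_of_range_prod_le hi
    rw [hs.rTensor W' P hPi hP₁ hP₂, hs'.lTensor W Q hQi hQ₁ hQ₂, Submodule.prod_top]
  · intro hc hc' K hj h₁ h₂
    obtain ⟨P, Q, rfl⟩ := hsplit K h₁
    obtain ⟨hP₁, hQ₁⟩ := Submodule.map_le_of_map_prodMap_le h₁
    obtain ⟨hP₂, hQ₂⟩ := Submodule.map_le_of_map_block_le h₂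
    obtain ⟨hPj, hQj⟩ := Submodule.le_ker_of_prod_le_ker_coprod hj
    rw [hc.rTensor W' P hPj hP₁ hP₂, hc'.lTensor W Q hQj hQ₁ hQ₂, Submodule.prod_bot]
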